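/- arXiv:1904.02521 — 6 statements merged into one kernel-verified Lean document; each statement's English description precedes it below -/
import Mathlib

section
/- Let p be a prime and let r, t be non-negative integers with r ≥ t and r - t even. Then there exists exactly one admissible quadruple (N, σ, δ, I) for the pair (r, t). -/
/-- The `i`-th digit of the base-`p` expansion of `n`. -/
def digit (p n i : ℕ) : ℕ := n / p ^ i % p

/-- `σ_I = ∑_{i ∈ I} p^i σ_i`. -/
def digitSum (p σ : ℕ) (I : Finset ℕ) : ℕ := ∑ i ∈ I, p ^ i * digit p σ i

/-- An admissible triple `(N, σ, δ)`. -/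
def AdmissibleTriple (p N σ δ : ℕ) : Prop :=
  σ < p ^ (N + 1) - p ^ N ∧ δ < p ^ (N + 1) - p ^ N ∧
  (∀ i < N, digit p σ i + digit p δ i ≤ p - 1) ∧
  digit p σ N + digit p δ N < p - 1

/-- An admissible quadruple `(N, σ, δ, I)`. -/
def AdmissibleQuadruple (p N σ δ : ℕ) (I : Finset ℕ) : Prop :=
  AdmissibleTriple p N σ δ ∧ ∀ i ∈ I, digit p σ i ≠ 0 ∧ i ≠ N

/-- An admissible quadruple for the pair `(r, t)`. -/
def AdmissibleQuadrupleFor (p r t N σ δ : ℕ) (I : Finset ℕ) : Prop :=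
  AdmissibleQuadruple p N σ δ I ∧
  t + 2 * digitSum p σ I = p ^ N - 1 + σ ∧
  r ≡ p ^ N - 1 + σ + 2 * δ [MOD 2 * p ^ (N + 1)]

namespace Aux

lemma digit_lt {p : ℕ} (hp : 2 ≤ p) (n i : ℕ) : digit p n i < p :=
  Nat.mod_lt _ (by omega)

lemma digit_add_mul {p : ℕ} (hp : 2 ≤ p) (a x j : ℕ) :
    digit p (a + p ^ (j + 1) * x) j = digit p a j := by
  have hpj : 0 < p ^ j := Nat.pow_pos (by omega)
  unfold digit
  rw [pow_succ, mul_assoc, Nat.add_mul_div_left _ _ hpj, Nat.add_mul_mod_self_left]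

lemma digit_top {p : ℕ} (hp : 2 ≤ p) (a x j : ℕ) (ha : a < p ^ j) (hx : x < p) :
    digit p (a + p ^ j * x) j = x := by
  have hpj : 0 < p ^ j := Nat.pow_pos (by omega)
  unfold digit
  rw [Nat.add_mul_div_left _ _ hpj, Nat.div_eq_of_lt ha, Nat.zero_add, Nat.mod_eq_of_lt hx]

lemma digit_of_lt {p : ℕ} (n j : ℕ) (h : n < p ^ j) : digit p n j = 0 := by
  unfold digit
  rw [Nat.div_eq_of_lt h, Nat.zero_mod]

lemma sum_digits_lt {p : ℕ} (hp : 2 ≤ p) (k : ℕ) (c : ℕ → ℕ) (hc : ∀ i < k, c i < p) :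
    ∑ i ∈ Finset.range k, p ^ i * c i < p ^ k := by
  induction k with
  | zero => simp
  | succ n ih =>
    rw [Finset.sum_range_succ, pow_succ]
    have h1 : ∑ i ∈ Finset.range n, p ^ i * c i < p ^ n := ih (fun i hi => hc i (by omega))
    have h2 : c n < p := hc n (by omega)
    have : p ^ n * c n ≤ p ^ n * (p - 1) := Nat.mul_le_mul_left _ (by omega)
    have hpn : 0 < p ^ n := Nat.pow_pos (by omega)
    nlinarith

lemma digit_sum_repr {p : ℕ} (hp : 2 ≤ p) (k : ℕ) (c : ℕ → ℕ) (hc : ∀ i < k, c i < p)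
    (j : ℕ) (hj : j < k) : digit p (∑ i ∈ Finset.range k, p ^ i * c i) j = c j := by
  induction k with
  | zero => omega
  | succ n ih =>
    rw [Finset.sum_range_succ]
    rcases Nat.lt_or_ge j n with h | h
    · have hn : p ^ n * c n = p ^ (j + 1) * (p ^ (n - j - 1) * c n) := by
        rw [← mul_assoc, ← pow_add]
        congr 2
        omega
      rw [hn, digit_add_mul hp, ih (fun i hi => hc i (by omega)) h]
    · have hjn : j = n := by omega
      subst hjn
      exact digit_top hp _ _ _ (sum_digits_lt hp j c (fun i hi => hc i (by omega))) (hc j (by omega))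

lemma mod_succ {p : ℕ} (n k : ℕ) : n % p ^ (k + 1) = n % p ^ k + p ^ k * digit p n k := by
  rw [pow_succ, Nat.mod_mul]; rfl

lemma mod_digits {p : ℕ} (hp : 2 ≤ p) (n k : ℕ) :
    n % p ^ k = ∑ i ∈ Finset.range k, p ^ i * digit p n i := by
  induction k with
  | zero => simp [Nat.mod_one]
  | succ j ih => rw [Finset.sum_range_succ, mod_succ, ih]

lemma digit_mod {p : ℕ} (hp : 2 ≤ p) (n k i : ℕ) (h : i < k) :
    digit p (n % p ^ k) i = digit p n i := by
  conv_rhs => rw [← Nat.mod_add_div n (p ^ k)]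
  have : p ^ k * (n / p ^ k) = p ^ (i + 1) * (p ^ (k - i - 1) * (n / p ^ k)) := by
    rw [← mul_assoc, ← pow_add]
    congr 2
    omega
  rw [this, digit_add_mul hp]

/-- the value `f` in the construction -/
def fval (p t m N : ℕ) : ℕ := t + m % p ^ (N + 1) + 1 - p ^ N

/-- the constructed `σ` -/
def sig0 (p t m N : ℕ) : ℕ :=
  ∑ i ∈ Finset.range (N + 1),
    p ^ i * (max (digit p (fval p t m N) i) (digit p m i)
      - min (digit p (fval p t m N) i) (digit p m i))

/-- the constructed `δ` -/
def del0 (p t m N : ℕ) : ℕ :=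
  ∑ i ∈ Finset.range (N + 1), p ^ i * min (digit p (fval p t m N) i) (digit p m i)

/-- the constructed `I` -/
def I0 (p t m N : ℕ) : Finset ℕ :=
  (Finset.range (N + 1)).filter (fun i => digit p (fval p t m N) i < digit p m i)

lemma existence {p : ℕ} (hp : 2 ≤ p) (t m N : ℕ)
    (hL : p ^ N ≤ t + m % p ^ N + 1)
    (hU : ¬ (p ^ (N + 1) ≤ t + m % p ^ (N + 1) + 1)) :
    AdmissibleQuadrupleFor p (t + 2 * m) t N (sig0 p t m N) (del0 p t m N) (I0 p t m N) := by
  have hP : 0 < p ^ N := Nat.pow_pos (by omega)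
  have hPP : p ^ (N + 1) = p ^ N * p := pow_succ p N
  set e := m % p ^ (N + 1) with he_def
  have he : e = m % p ^ N + p ^ N * digit p m N := mod_succ m N
  have hdmN : digit p m N < p := digit_lt hp m N
  set f := fval p t m N with hf_def
  have hBl : p ^ N + p ^ N * digit p m N ≤ t + e + 1 := by omega
  have hBu : t + e + 1 < p ^ (N + 1) := by omega
  have hf : t + e + 1 = p ^ N + f := by
    rw [hf_def]; unfold fval; omega
  have hflt : f < p ^ (N + 1) - p ^ N := by
    have : p ^ N ≤ p ^ N * p := Nat.le_mul_of_pos_right _ (by omega)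
    omega
  have hfltP : f < p ^ (N + 1) := by omega
  -- digit N of f
  have hfdivlt : f / p ^ N < p - 1 := by
    rw [Nat.div_lt_iff_lt_mul hP]
    have : (p - 1) * p ^ N = p ^ N * p - p ^ N := by
      rw [Nat.sub_mul, one_mul, mul_comm]
    omega
  have hfdiv : digit p f N = f / p ^ N := by
    unfold digit
    exact Nat.mod_eq_of_lt (by omega)
  have hmNf : digit p m N ≤ digit p f N := by
    rw [hfdiv, Nat.le_div_iff_mul_le hP, mul_comm]
    omega
  have hfNle : digit p f N ≤ p - 2 := by omega
  -- digit abbreviations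
  set s : ℕ → ℕ := fun i => max (digit p f i) (digit p m i) - min (digit p f i) (digit p m i)
    with hs_def
  set d : ℕ → ℕ := fun i => min (digit p f i) (digit p m i) with hd_def
  have hfi_lt : ∀ i, digit p f i < p := fun i => digit_lt hp f i
  have hmi_lt : ∀ i, digit p m i < p := fun i => digit_lt hp m i
  have hs_lt : ∀ i < N + 1, s i < p := by
    intro i _
    have := hfi_lt i; have := hmi_lt i
    simp only [hs_def]
    omega
  have hd_lt : ∀ i < N + 1, d i < p := by
    intro i _
    have := hfi_lt i; have := hmi_lt i
    simp only [hd_def]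
    omega
  have hsig : sig0 p t m N = ∑ i ∈ Finset.range (N + 1), p ^ i * s i := rfl
  have hdel : del0 p t m N = ∑ i ∈ Finset.range (N + 1), p ^ i * d i := rfl
  have hdsig : ∀ i < N + 1, digit p (sig0 p t m N) i = s i := by
    intro i hi
    rw [hsig]
    exact digit_sum_repr hp _ s hs_lt i hi
  have hddel : ∀ i < N + 1, digit p (del0 p t m N) i = d i := by
    intro i hi
    rw [hdel]
    exact digit_sum_repr hp _ d hd_lt i hi
  -- bound lemmas
  have keymul : p ^ N * p = p ^ N * (p - 2) + 2 * p ^ N := by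
    have hx : p - 2 + 2 = p := by omega
    calc p ^ N * p = p ^ N * (p - 2 + 2) := by rw [hx]
    _ = p ^ N * (p - 2) + 2 * p ^ N := by ring
  have hsN : s N ≤ p - 2 := by
    simp only [hs_def]
    omega
  have hdN : d N ≤ p - 2 := by
    simp only [hd_def]
    omega
  have hsig_lt : sig0 p t m N < p ^ (N + 1) - p ^ N := by
    rw [hsig, Finset.sum_range_succ]
    have h1 : ∑ i ∈ Finset.range N, p ^ i * s i < p ^ N :=
      sum_digits_lt hp N s (fun i hi => hs_lt i (by omega))
    have h2 : p ^ N * s N ≤ p ^ N * (p - 2) := Nat.mul_le_mul_left _ hsN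
    omega
  have hdel_lt : del0 p t m N < p ^ (N + 1) - p ^ N := by
    rw [hdel, Finset.sum_range_succ]
    have h1 : ∑ i ∈ Finset.range N, p ^ i * d i < p ^ N :=
      sum_digits_lt hp N d (fun i hi => hd_lt i (by omega))
    have h2 : p ^ N * d N ≤ p ^ N * (p - 2) := Nat.mul_le_mul_left _ hdN
    omega
  -- sum representations
  have hfsum : f = ∑ i ∈ Finset.range (N + 1), p ^ i * digit p f i := by
    conv_lhs => rw [← Nat.mod_eq_of_lt hfltP]
    exact mod_digits hp f (N + 1)
  have hesum : e = ∑ i ∈ Finset.range (N + 1), p ^ i * digit p m i := mod_digits hp m (N + 1)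
  -- digitSum computation
  have hdS : digitSum p (sig0 p t m N) (I0 p t m N)
      = ∑ i ∈ Finset.range (N + 1),
          p ^ i * (if digit p f i < digit p m i then s i else 0) := by
    unfold digitSum I0
    simp only [← hf_def]
    rw [Finset.sum_filter]
    refine Finset.sum_congr rfl ?_
    intro i hi
    rw [Finset.mem_range] at hi
    by_cases hc : digit p f i < digit p m i
    · simp only [hc, if_true, hdsig i hi]
    · simp only [hc, if_false, mul_zero]
  -- identity 1 : e + sig0 = f + 2 * digitSum
  have hscal1 : ∀ i, digit p m i + s i
      = digit p f i + 2 * (if digit p f i < digit p m i then s i else 0) := by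
    intro i
    simp only [hs_def]
    split_ifs <;> omega
  have hid1 : e + sig0 p t m N = f + 2 * digitSum p (sig0 p t m N) (I0 p t m N) := by
    rw [hdS, hesum, hsig]
    nth_rewrite 1 [hfsum]
    rw [← Finset.sum_add_distrib, Finset.mul_sum, ← Finset.sum_add_distrib]
    refine Finset.sum_congr rfl ?_
    intro i _
    rw [← Nat.mul_add, hscal1 i]
    ring
  -- identity 2 : digitSum + del0 = e
  have hscal2 : ∀ i, (if digit p f i < digit p m i then s i else 0) + d i
      = digit p m i := by
    intro i
    simp only [hs_def, hd_def]
    split_ifs <;> omega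
  have hid2 : digitSum p (sig0 p t m N) (I0 p t m N) + del0 p t m N = e := by
    rw [hdS, hesum, hdel, ← Finset.sum_add_distrib]
    refine Finset.sum_congr rfl ?_
    intro i _
    rw [← Nat.mul_add, hscal2 i]
  have heq2 : t + 2 * digitSum p (sig0 p t m N) (I0 p t m N) = p ^ N - 1 + sig0 p t m N := by
    omega
  refine ⟨⟨⟨hsig_lt, hdel_lt, ?_, ?_⟩, ?_⟩, heq2, ?_⟩
  · intro i hi
    rw [hdsig i (by omega), hddel i (by omega)]
    have := hfi_lt i; have := hmi_lt i
    simp only [hs_def, hd_def]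
    omega
  · rw [hdsig N (by omega), hddel N (by omega)]
    simp only [hs_def, hd_def]
    omega
  · intro i hi
    unfold I0 at hi
    simp only [← hf_def] at hi
    rw [Finset.mem_filter, Finset.mem_range] at hi
    obtain ⟨hi1, hi2⟩ := hi
    have hiN : i ≠ N := by
      intro h
      rw [h] at hi2
      omega
    refine ⟨?_, hiN⟩
    rw [hdsig i hi1]
    simp only [hs_def]
    omega
  · have hrew : p ^ N - 1 + sig0 p t m N + 2 * del0 p t m N = t + 2 * e := by omega
    rw [hrew]
    have hme : m ≡ e [MOD p ^ (N + 1)] := (Nat.mod_modEq m _).symm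
    exact (hme.mul_left' 2).add_left t

lemma uniqueness {p : ℕ} (hp : 2 ≤ p) (t m N σ δ : ℕ) (I : Finset ℕ)
    (h : AdmissibleQuadrupleFor p (t + 2 * m) t N σ δ I) :
    (p ^ N ≤ t + m % p ^ N + 1) ∧ ¬ (p ^ (N + 1) ≤ t + m % p ^ (N + 1) + 1) ∧
    σ = sig0 p t m N ∧ δ = del0 p t m N ∧ I = I0 p t m N := by
  obtain ⟨⟨⟨hσb, hδb, hdig, hdigN⟩, hImem⟩, h2, h3⟩ := h
  have hP : 0 < p ^ N := Nat.pow_pos (by omega)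
  have hPle : p ^ N ≤ p ^ (N + 1) := Nat.pow_le_pow_right (by omega) (by omega)
  have hσP : σ < p ^ (N + 1) := by omega
  have hδP : δ < p ^ (N + 1) := by omega
  have hNI : N ∉ I := fun hN => (hImem N hN).2 rfl
  have hIlt : ∀ i ∈ I, i < N := by
    intro i hi
    obtain ⟨hne0, hneN⟩ := hImem i hi
    by_contra hge
    push_neg at hge
    have h1 : σ < p ^ i :=
      lt_of_lt_of_le hσP (Nat.pow_le_pow_right (by omega) (by omega))
    exact hne0 (digit_of_lt σ i h1)
  set E : ℕ → ℕ := fun i => digit p δ i + (if i ∈ I then digit p σ i else 0) with hE_def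
  set F : ℕ → ℕ := fun i => digit p δ i + (if i ∈ I then 0 else digit p σ i) with hF_def
  have hσi_lt : ∀ i, digit p σ i < p := digit_lt hp σ
  have hδi_lt : ∀ i, digit p δ i < p := digit_lt hp δ
  have hE_lt : ∀ i < N + 1, E i < p := by
    intro i hi
    simp only [hE_def]
    split_ifs with h'
    · have hiN := hIlt i h'
      have := hdig i hiN
      omega
    · have := hδi_lt i
      omega
  have hF_lt : ∀ i < N + 1, F i < p := by
    intro i hi
    simp only [hF_def]
    split_ifs with h'
    · have := hδi_lt i
      omega
    · rcases Nat.lt_or_ge i N with h'' | h''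
      · have := hdig i h''
        omega
      · have hiN : i = N := by omega
        subst hiN
        omega
  have hEN : E N = digit p δ N := by simp only [hE_def, if_neg hNI, Nat.add_zero]
  have hFN : F N = digit p δ N + digit p σ N := by simp only [hF_def, if_neg hNI]
  have hσsum : σ = ∑ i ∈ Finset.range (N + 1), p ^ i * digit p σ i := by
    have := mod_digits hp σ (N + 1)
    rwa [Nat.mod_eq_of_lt hσP] at this
  have hδsum : δ = ∑ i ∈ Finset.range (N + 1), p ^ i * digit p δ i := by
    have := mod_digits hp δ (N + 1)
    rwa [Nat.mod_eq_of_lt hδP] at this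
  have hsub : I ⊆ Finset.range (N + 1) := by
    intro i hi
    rw [Finset.mem_range]
    have := hIlt i hi
    omega
  have hdSI : digitSum p σ I
      = ∑ i ∈ Finset.range (N + 1), p ^ i * (if i ∈ I then digit p σ i else 0) := by
    unfold digitSum
    rw [eq_comm]
    calc ∑ i ∈ Finset.range (N + 1), p ^ i * (if i ∈ I then digit p σ i else 0)
        = ∑ i ∈ Finset.range (N + 1), (if i ∈ I then p ^ i * digit p σ i else 0) := by
          refine Finset.sum_congr rfl ?_
          intro i _
          split_ifs <;> simp
    _ = ∑ i ∈ Finset.range (N + 1) ∩ I, p ^ i * digit p σ i := Finset.sum_ite_mem _ _ _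
    _ = ∑ i ∈ I, p ^ i * digit p σ i := by rw [Finset.inter_eq_right.mpr hsub]
  set eV := δ + digitSum p σ I with he_def
  have heV : eV = ∑ i ∈ Finset.range (N + 1), p ^ i * E i := by
    rw [he_def, hdSI]
    nth_rewrite 1 [hδsum]
    rw [← Finset.sum_add_distrib]
    refine Finset.sum_congr rfl ?_
    intro i _
    simp only [hE_def]
    rw [Nat.mul_add]
  have heV_lt : eV < p ^ (N + 1) := by
    rw [heV]
    exact sum_digits_lt hp _ E hE_lt
  set fV := ∑ i ∈ Finset.range (N + 1), p ^ i * F i with hfV_def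
  have keymul : p ^ N * p = p ^ N * (p - 2) + 2 * p ^ N := by
    have hx : p - 2 + 2 = p := by omega
    calc p ^ N * p = p ^ N * (p - 2 + 2) := by rw [hx]
    _ = p ^ N * (p - 2) + 2 * p ^ N := by ring
  have hPP : p ^ (N + 1) = p ^ N * p := pow_succ p N
  have hFNle : F N ≤ p - 2 := by rw [hFN]; omega
  have hfV_lt : fV < p ^ (N + 1) - p ^ N := by
    rw [hfV_def, Finset.sum_range_succ]
    have h1 : ∑ i ∈ Finset.range N, p ^ i * F i < p ^ N :=
      sum_digits_lt hp N F (fun i hi => hF_lt i (by omega))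
    have h2' : p ^ N * F N ≤ p ^ N * (p - 2) := Nat.mul_le_mul_left _ hFNle
    omega
  have heq : eV = δ + digitSum p σ I := he_def
  have h3' : t + 2 * m ≡ t + 2 * eV [MOD 2 * p ^ (N + 1)] := by
    have hrw : p ^ N - 1 + σ + 2 * δ = t + 2 * eV := by omega
    rw [← hrw]
    exact h3
  have h4 : 2 * m ≡ 2 * eV [MOD 2 * p ^ (N + 1)] := Nat.ModEq.add_left_cancel' t h3'
  have hme : m % p ^ (N + 1) = eV := by
    unfold Nat.ModEq at h4
    rw [Nat.mul_mod_mul_left, Nat.mul_mod_mul_left] at h4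
    have := Nat.mod_eq_of_lt heV_lt
    omega
  have hdm : ∀ i < N + 1, digit p m i = E i := by
    intro i hi
    rw [← digit_mod hp m (N + 1) i hi, hme, heV]
    exact digit_sum_repr hp _ E hE_lt i hi
  have hscal : ∀ i, E i + digit p σ i
      = F i + 2 * (if i ∈ I then digit p σ i else 0) := by
    intro i
    simp only [hE_def, hF_def]
    split_ifs <;> omega
  have hid : eV + σ = fV + 2 * digitSum p σ I := by
    rw [hdSI, heV, hfV_def]
    nth_rewrite 1 [hσsum]
    rw [← Finset.sum_add_distrib, Finset.mul_sum, ← Finset.sum_add_distrib]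
    refine Finset.sum_congr rfl ?_
    intro i _
    rw [← Nat.mul_add, hscal i]
    ring
  have hfeq : t + eV + 1 = p ^ N + fV := by omega
  have hUc : ¬ (p ^ (N + 1) ≤ t + m % p ^ (N + 1) + 1) := by
    rw [hme]
    omega
  have hLc : p ^ N ≤ t + m % p ^ N + 1 := by
    have hm1 : m % p ^ (N + 1) = m % p ^ N + p ^ N * digit p m N := mod_succ m N
    have hdmN : digit p m N = E N := hdm N (by omega)
    rw [hdmN] at hm1
    have hENF : E N ≤ F N := by rw [hEN, hFN]; omega
    have hfVN : p ^ N * F N ≤ fV := by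
      rw [hfV_def, Finset.sum_range_succ]
      omega
    have hmul : p ^ N * E N ≤ p ^ N * F N := Nat.mul_le_mul_left _ hENF
    omega
  have hfval : fval p t m N = fV := by
    unfold fval
    omega
  have hdf : ∀ i < N + 1, digit p (fval p t m N) i = F i := by
    intro i hi
    rw [hfval, hfV_def]
    exact digit_sum_repr hp _ F hF_lt i hi
  refine ⟨hLc, hUc, ?_, ?_, ?_⟩
  · rw [hσsum]
    unfold sig0
    refine Finset.sum_congr rfl ?_
    intro i hi
    rw [Finset.mem_range] at hi
    rw [hdf i hi, hdm i hi]
    congr 1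
    simp only [hE_def, hF_def]
    split_ifs <;> omega
  · rw [hδsum]
    unfold del0
    refine Finset.sum_congr rfl ?_
    intro i hi
    rw [Finset.mem_range] at hi
    rw [hdf i hi, hdm i hi]
    congr 1
    simp only [hE_def, hF_def]
    split_ifs <;> omega
  · unfold I0
    ext i
    rw [Finset.mem_filter, Finset.mem_range]
    constructor
    · intro hi
      have hiN := hIlt i hi
      refine ⟨by omega, ?_⟩
      rw [hdf i (by omega), hdm i (by omega)]
      simp only [hE_def, hF_def, if_pos hi]
      have := (hImem i hi).1
      omega
    · rintro ⟨hi1, hi2⟩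
      rw [hdf i hi1, hdm i hi1] at hi2
      by_contra hni
      simp only [hE_def, hF_def, if_neg hni] at hi2
      omega

lemma notL_step {p : ℕ} (hp : 2 ≤ p) (t m k : ℕ)
    (h : ¬ (p ^ k ≤ t + m % p ^ k + 1)) : ¬ (p ^ (k + 1) ≤ t + m % p ^ (k + 1) + 1) := by
  rw [mod_succ]
  have hd : digit p m k < p := digit_lt hp m k
  have h2 : p ^ k * (digit p m k + 1) ≤ p ^ k * p := Nat.mul_le_mul_left _ (by omega)
  rw [pow_succ]
  push_neg at h ⊢
  nlinarith

lemma notL_mono {p : ℕ} (hp : 2 ≤ p) (t m : ℕ) {a b : ℕ} (hab : a ≤ b)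
    (h : ¬ (p ^ a ≤ t + m % p ^ a + 1)) : ¬ (p ^ b ≤ t + m % p ^ b + 1) := by
  induction b, hab using Nat.le_induction with
  | base => exact h
  | succ n hn ih => exact notL_step hp t m n ih

lemma exists_notL {p : ℕ} (hp : 2 ≤ p) (t m : ℕ) : ∃ k, ¬ (p ^ k ≤ t + m % p ^ k + 1) := by
  refine ⟨t + m + 2, ?_⟩
  have h1 : t + m + 2 < p ^ (t + m + 2) := Nat.lt_pow_self (by omega)
  have h2 : m % p ^ (t + m + 2) ≤ m := Nat.mod_le _ _
  omega

lemma N_exists {p : ℕ} (hp : 2 ≤ p) (t m : ℕ) :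
    ∃ N, (p ^ N ≤ t + m % p ^ N + 1) ∧ ¬ (p ^ (N + 1) ≤ t + m % p ^ (N + 1) + 1) := by
  have hex : ∃ k, ¬ (p ^ (k + 1) ≤ t + m % p ^ (k + 1) + 1) := by
    obtain ⟨k, hk⟩ := exists_notL hp t m
    match k, hk with
    | 0, hk => exact absurd (by simpa using Nat.one_le_iff_ne_zero.mpr (by positivity)) hk
    | (j+1), hk => exact ⟨j, hk⟩
  refine ⟨Nat.find hex, ?_, Nat.find_spec hex⟩
  rcases Nat.eq_zero_or_pos (Nat.find hex) with h0 | h0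
  · rw [h0]; simp [Nat.mod_one]
  · obtain ⟨j, hj⟩ : ∃ j, Nat.find hex = j + 1 := ⟨Nat.find hex - 1, by omega⟩
    rw [hj]
    have := Nat.find_min hex (show j < Nat.find hex by omega)
    push_neg at this
    exact this

lemma N_unique {p : ℕ} (hp : 2 ≤ p) (t m : ℕ) {N N' : ℕ}
    (h1 : p ^ N ≤ t + m % p ^ N + 1) (h2 : ¬ (p ^ (N + 1) ≤ t + m % p ^ (N + 1) + 1))
    (h1' : p ^ N' ≤ t + m % p ^ N' + 1) (h2' : ¬ (p ^ (N' + 1) ≤ t + m % p ^ (N' + 1) + 1)) :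
    N = N' := by
  by_contra hne
  rcases Nat.lt_or_ge N N' with h | h
  · exact notL_mono hp t m (show N + 1 ≤ N' by omega) h2 h1'
  · exact notL_mono hp t m (show N' + 1 ≤ N by omega) h2' h1


end Aux

theorem stmt_0 (p : ℕ) (hp : p.Prime) (r t : ℕ) (hrt : t ≤ r) (hev : Even (r - t)) :
    ∃! q : ℕ × ℕ × ℕ × Finset ℕ,
      AdmissibleQuadrupleFor p r t q.1 q.2.1 q.2.2.1 q.2.2.2 := by
  have hp2 : 2 ≤ p := hp.two_le
  obtain ⟨m, hm⟩ := hev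
  have hr : r = t + 2 * m := by omega
  subst hr
  obtain ⟨N, hL, hU⟩ := Aux.N_exists hp2 t m
  refine ⟨(N, Aux.sig0 p t m N, Aux.del0 p t m N, Aux.I0 p t m N),
    Aux.existence hp2 t m N hL hU, ?_⟩
  rintro ⟨N', σ', δ', I'⟩ hq
  obtain ⟨hL', hU', hσ, hδ, hI⟩ := Aux.uniqueness hp2 t m N' σ' δ' I' hq
  have hNN : N' = N := Aux.N_unique hp2 t m hL' hU' hL hU
  subst hNN
  subst hσ
  subst hδ
  subst hI
  rfl
end

section
/- Let p be a prime and let r, t be non-negative integers with r ≥ t and r - t even; set u = (r - t)/2. If t + u_0 < p - 1 (where u_0 is the 0-th base-p digit of u), then (0, t, u_0, ∅) is an admissible quadruple for the pair (r, t), and moreover every admissible quadruple for the pair (r, t) is equal to (0, t, u_0, ∅); in particular every admissible quadruple for (r, t) has N = 0. -/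
lemma digit_zero' (p n : ℕ) : digit p n 0 = n % p := by simp [digit]

lemma digit_eq_zero' (p n i : ℕ) (h : n < p ^ i) : digit p n i = 0 := by
  simp [digit, Nat.div_eq_of_lt h]

lemma digitSum_range' (p σ N : ℕ) :
    ∑ i ∈ Finset.range N, p ^ i * digit p σ i = σ % p ^ N := by
  induction N with
  | zero => simp [Nat.mod_one]
  | succ N ih =>
    rw [Finset.sum_range_succ, ih, pow_succ, Nat.mod_mul]
    rfl

lemma cancel2' (t x y m : ℕ) (h : t + 2 * x ≡ t + 2 * y [MOD 2 * m]) :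
    x % m = y % m := by
  have h2 : 2 * x ≡ 2 * y [MOD 2 * m] := Nat.ModEq.add_left_cancel' t h
  have e1 : (2 * x) % (2 * m) = 2 * (x % m) := Nat.mul_mod_mul_left 2 x m
  have e2 : (2 * y) % (2 * m) = 2 * (y % m) := Nat.mul_mod_mul_left 2 y m
  have : (2 * x) % (2 * m) = (2 * y) % (2 * m) := h2
  omega

theorem stmt_2 (p : ℕ) (hp : p.Prime) (r t : ℕ) (hrt : t ≤ r) (hev : Even (r - t))
    (hlt : t + digit p ((r - t) / 2) 0 < p - 1) :
    AdmissibleQuadrupleFor p r t 0 t (digit p ((r - t) / 2) 0) ∅ ∧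
    ∀ N σ δ (I : Finset ℕ), AdmissibleQuadrupleFor p r t N σ δ I →
      N = 0 ∧ σ = t ∧ δ = digit p ((r - t) / 2) 0 ∧ I = ∅ := by
  set u := (r - t) / 2 with hu
  have hp2 : 2 ≤ p := hp.two_le
  have hru : r = t + 2 * u := by
    obtain ⟨k, hk⟩ := hev
    omega
  have hu0 : digit p u 0 = u % p := digit_zero' p u
  rw [hu0] at hlt ⊢
  have hupp : (u % p) % p = u % p := Nat.mod_mod_of_dvd u dvd_rfl
  have ht : t < p - 1 := by omega
  constructor
  · refine ⟨⟨⟨?_, ?_, ?_, ?_⟩, ?_⟩, ?_, ?_⟩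
    · simpa using ht
    · simpa using (by omega : u % p < p - 1)
    · intro i hi; omega
    · rw [digit_zero', digit_zero', Nat.mod_eq_of_lt (by omega : t < p), hupp]
      exact hlt
    · intro i hi; simp at hi
    · simp [digitSum]
    · have h1 : u ≡ u % p [MOD p] := (Nat.mod_modEq u p).symm
      have h2 : 2 * u ≡ 2 * (u % p) [MOD 2 * p] := h1.mul_left' 2
      have h3 := h2.add_left t
      simpa [hru] using h3
  · intro N σ δ I H
    obtain ⟨⟨⟨hσ, hδ, hdig, hdigN⟩, hI⟩, hsum, hmod⟩ := H
    have hpNpos : 0 < p ^ N := Nat.pow_pos (by omega)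
    have hpN1pos : 0 < p ^ (N + 1) := Nat.pow_pos (by omega)
    -- key congruence : u ≡ σ_I + δ mod p^(N+1)
    have key : u % p ^ (N + 1) = (digitSum p σ I + δ) % p ^ (N + 1) := by
      apply cancel2' t
      have e : t + 2 * (digitSum p σ I + δ) = p ^ N - 1 + σ + 2 * δ := by omega
      rw [e, ← hru]
      exact hmod
    -- I ⊆ range N
    have hImem : I ⊆ Finset.range N := by
      intro i hi
      obtain ⟨hne, hneN⟩ := hI i hi
      rw [Finset.mem_range]
      rcases Nat.lt_or_ge i N with h | h
      · exact h
      · exfalso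
        rcases Nat.eq_or_lt_of_le h with h' | h'
        · exact hneN h'.symm
        · apply hne
          apply digit_eq_zero'
          have h1 : σ < p ^ (N + 1) := by omega
          exact lt_of_lt_of_le h1 (Nat.pow_le_pow_right (by omega) h')
    have hN : N = 0 := by
      by_contra hN0
      have hN1 : 1 ≤ N := Nat.one_le_iff_ne_zero.mpr hN0
      set J := I.erase 0 with hJ
      set S := digitSum p σ J with hS
      have hJI : J ⊆ I := Finset.erase_subset 0 I
      have h0J : (0 : ℕ) ∉ J := Finset.notMem_erase 0 I
      have hins : insert 0 J ⊆ Finset.range N := by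
        intro i hi
        rcases Finset.mem_insert.mp hi with h | h
        · subst h; exact Finset.mem_range.mpr hN1
        · exact hImem (hJI h)
      have hle1 : digit p σ 0 + S ≤ σ % p ^ N := by
        have e : digit p σ 0 + S = ∑ i ∈ insert 0 J, p ^ i * digit p σ i := by
          rw [Finset.sum_insert h0J]; simp only [pow_zero, one_mul]; rw [hS, digitSum]
        rw [e, ← digitSum_range' p σ N]
        exact Finset.sum_le_sum_of_subset hins
      have hmodle : σ % p ^ N ≤ σ := Nat.mod_le σ _
      have hmodlt : σ % p ^ N < p ^ N := Nat.mod_lt σ hpNpos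
      have hJdvd : p ∣ S := by
        apply Finset.dvd_sum
        intro i hi
        have hi0 : i ≠ 0 := (Finset.mem_erase.mp hi).1
        exact Dvd.dvd.mul_right (dvd_pow_self p hi0) _
      have hpdvdN : p ∣ p ^ N := dvd_pow_self p hN0
      have hSle : S ≤ p ^ N - p := by
        have hd : p ∣ p ^ N - S := Nat.dvd_sub hpdvdN hJdvd
        have hSlt : S < p ^ N := by omega
        have : p ≤ p ^ N - S := Nat.le_of_dvd (by omega) hd
        omega
      set c := if 0 ∈ I then digit p σ 0 else 0 with hc
      have hclt : c ≤ digit p σ 0 := by rw [hc]; split <;> omega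
      have hc_def : digitSum p σ I = c + S := by
        rw [hc]
        by_cases h0 : 0 ∈ I
        · rw [if_pos h0]
          have e := Finset.add_sum_erase I (fun i => p ^ i * digit p σ i) h0
          simp only [pow_zero, one_mul] at e
          rw [digitSum, ← e]; rfl
        · rw [if_neg h0, zero_add, hS, hJ, Finset.erase_eq_of_notMem h0]
      have hkey : u % p = (digitSum p σ I + δ) % p := by
        have : u ≡ digitSum p σ I + δ [MOD p ^ (N + 1)] := key
        exact this.of_dvd (dvd_pow_self p (Nat.succ_ne_zero N))
      have hδ0 : digit p δ 0 = δ % p := digit_zero' p δ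
      have hnd : digit p σ 0 + digit p δ 0 ≤ p - 1 := hdig 0 hN1
      have hσ0lt : digit p σ 0 < p := Nat.mod_lt _ (by omega)
      have hup : u % p = c + δ % p := by
        rw [hkey, hc_def]
        obtain ⟨a, ha⟩ := hJdvd
        rw [ha]
        have e1 : c + p * a + δ = c + δ + a * p := by ring
        rw [e1, Nat.add_mul_mod_self_right, Nat.add_mod c δ p,
          Nat.mod_eq_of_lt (show c < p by omega)]
        exact Nat.mod_eq_of_lt (by omega)
      rw [hc_def] at hsum
      have hpN : p ≤ p ^ N := by
        calc p = p ^ 1 := (pow_one p).symm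
        _ ≤ p ^ N := Nat.pow_le_pow_right (by omega) hN1
      omega
    subst hN
    have hσp : σ < p - 1 := by simpa using hσ
    have hδp : δ < p - 1 := by simpa using hδ
    have hIe : I = ∅ := by
      rw [Finset.eq_empty_iff_forall_notMem]
      intro i hi
      obtain ⟨hne, hne0⟩ := hI i hi
      apply hne
      apply digit_eq_zero'
      have h1 : p ≤ p ^ i := Nat.le_self_pow hne0 p
      omega
    subst hIe
    simp only [digitSum, Finset.sum_empty, mul_zero, add_zero, pow_zero] at hsum key
    -- hsum : t = 1 - 1 + σ
    have hσt : σ = t := by omega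
    refine ⟨rfl, hσt, ?_, rfl⟩
    -- key : u % p^1 = δ % p^1
    rw [pow_one, zero_add] at key
    rw [key]
    exact (Nat.mod_eq_of_lt (by omega)).symm
end

section
/- Let p be a prime and σ a non-negative integer, and let I and J be finite subsets of {i ∈ ℕ : σ_i ≠ 0}. Then σ_I ≤ σ_J if and only if max(I \ J) ≤ max(J \ I), where for a finite set A of non-negative integers max(A) denotes its maximum in ℕ ∪ {⊥} with the convention max(∅) = ⊥ (and ⊥ is below every natural number). -/
/-! Removing `I ∩ J` from both sides reduces the claim to disjoint sets. The terms `p^i σ_i` with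
`i < m` add up to at most `σ mod p^m < p^m`, while one nonzero digit at position `m` already
contributes `p^m`; hence of two disjoint sets the one with the larger maximum has the larger sum,
and two disjoint sets with the same maximum are both empty. -/

theorem Finset.eq_empty_of_disjoint_of_max_eq {α : Type*} [LinearOrder α] {A B : Finset α}
    (hAB : Disjoint A B) (h : A.max = B.max) : A = ∅ := by
  cases hA : A.max with
  | bot => exact Finset.max_eq_bot.mp hA
  | coe m =>
    exact absurd (Finset.mem_of_max (h ▸ hA)) (Finset.disjoint_left.mp hAB (Finset.mem_of_max hA))

theorem digitSum_range (p σ m : ℕ) : digitSum p σ (Finset.range m) = σ % p ^ m := by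
  induction m with
  | zero => simp [digitSum, Nat.mod_one]
  | succ m ih =>
    rw [digitSum, Finset.sum_range_succ, ← digitSum, ih, Nat.mod_pow_succ, digit]

section

variable {p σ : ℕ}

theorem digitSum_lt_pow (hp : 0 < p) {A : Finset ℕ} {m : ℕ} (hA : ∀ a ∈ A, a < m) :
    digitSum p σ A < p ^ m :=
  calc digitSum p σ A ≤ digitSum p σ (Finset.range m) :=
        Finset.sum_le_sum_of_subset fun a ha => Finset.mem_range.mpr (hA a ha)
    _ = σ % p ^ m := digitSum_range p σ m
    _ < p ^ m := Nat.mod_lt _ (pow_pos hp m)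

theorem pow_le_digitSum {A : Finset ℕ} {m : ℕ} (hm : m ∈ A) (hd : digit p σ m ≠ 0) :
    p ^ m ≤ digitSum p σ A :=
  calc p ^ m ≤ p ^ m * digit p σ m := Nat.le_mul_of_pos_right _ (Nat.pos_of_ne_zero hd)
    _ ≤ digitSum p σ A := Finset.single_le_sum (f := fun i => p ^ i * digit p σ i)
        (fun _ _ => Nat.zero_le _) hm

theorem digitSum_lt_digitSum_of_max_lt (hp : 0 < p) {A B : Finset ℕ}
    (hB : ∀ b ∈ B, digit p σ b ≠ 0) (h : A.max < B.max) :
    digitSum p σ A < digitSum p σ B := by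
  obtain ⟨m, hm⟩ := WithBot.ne_bot_iff_exists.mp h.ne_bot
  have hmB : m ∈ B := Finset.mem_of_max hm.symm
  have hA : ∀ a ∈ A, a < m := fun a ha =>
    WithBot.coe_lt_coe.mp ((Finset.le_max ha).trans_lt (hm ▸ h))
  exact (digitSum_lt_pow hp hA).trans_le (pow_le_digitSum hmB (hB m hmB))

theorem digitSum_le_digitSum_iff_of_disjoint (hp : 0 < p) {A B : Finset ℕ} (hAB : Disjoint A B)
    (hA : ∀ a ∈ A, digit p σ a ≠ 0) (hB : ∀ b ∈ B, digit p σ b ≠ 0) :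
    digitSum p σ A ≤ digitSum p σ B ↔ A.max ≤ B.max := by
  refine ⟨fun h => not_lt.mp fun hlt => (digitSum_lt_digitSum_of_max_lt hp hA hlt).not_ge h,
    fun h => ?_⟩
  rcases h.lt_or_eq with hlt | heq
  · exact (digitSum_lt_digitSum_of_max_lt hp hB hlt).le
  · simp [Finset.eq_empty_of_disjoint_of_max_eq hAB heq, digitSum]

end

theorem stmt_5 (p : ℕ) (hp : p.Prime) (σ : ℕ) (I J : Finset ℕ)
    (hI : ∀ i ∈ I, digit p σ i ≠ 0) (hJ : ∀ i ∈ J, digit p σ i ≠ 0) :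
    digitSum p σ I ≤ digitSum p σ J ↔ (I \ J).max ≤ (J \ I).max := by
  rw [digitSum, digitSum, ← Finset.sum_sdiff_le_sum_sdiff]
  exact digitSum_le_digitSum_iff_of_disjoint hp.pos disjoint_sdiff_sdiff
    (fun i hi => hI i (Finset.mem_sdiff.mp hi).1) (fun i hi => hJ i (Finset.mem_sdiff.mp hi).1)
end

section
/- Let p be a prime and let r, s be non-negative integers with r ≥ s and r - s even; set u = (r - s)/2. Let N be the non-negative integer with p^N - 1 ≤ s < p^{N+1} - 1 and set σ = s - (p^N - 1). Then there exists a non-negative integer δ such that (N, σ, δ) is an admissible triple and r ≡ (p^N - 1) + σ + 2δ (mod 2p^{N+1}) if and only if σ_i + u_i ≤ p - 1 for all 0 ≤ i < N and σ_N + u_N < p - 1. -/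
lemma digit_mod_pow' (p u N i : ℕ) (h : i ≤ N) :
    digit p (u % p ^ (N + 1)) i = digit p u i := by
  unfold digit
  rw [← Nat.mod_mul_right_div_self, ← Nat.mod_mul_right_div_self, ← pow_succ,
    Nat.mod_mod_of_dvd _ (pow_dvd_pow p (by omega))]

theorem stmt_7 (p : ℕ) (hp : p.Prime) (r s : ℕ) (hrs : s ≤ r) (hev : Even (r - s))
    (N : ℕ) (hN1 : p ^ N - 1 ≤ s) (hN2 : s < p ^ (N + 1) - 1)
    (σ : ℕ) (hσ : σ = s - (p ^ N - 1)) :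
    (∃ δ : ℕ, AdmissibleTriple p N σ δ ∧
        r ≡ p ^ N - 1 + σ + 2 * δ [MOD 2 * p ^ (N + 1)]) ↔
      ((∀ i < N, digit p σ i + digit p ((r - s) / 2) i ≤ p - 1) ∧
        digit p σ N + digit p ((r - s) / 2) N < p - 1) := by

  have hpo : 0 < p := hp.pos
  have hp2 : 2 ≤ p := hp.two_le
  have h1N : 1 ≤ p ^ N := Nat.one_le_pow N p hpo
  have hMN : p ^ N ≤ p ^ (N + 1) := Nat.pow_le_pow_right hpo (by omega)
  have hps : p ^ N - 1 + σ = s := by omega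
  set u := (r - s) / 2 with hu
  have hru : r = s + 2 * u := by
    obtain ⟨k, hk⟩ := hev; omega
  have hMpos : 0 < p ^ (N + 1) := Nat.one_le_pow _ p hpo
  have hNpos : 0 < p ^ N := h1N
  have hpow : p ^ (N + 1) = p ^ N * p := pow_succ p N
  constructor
  · rintro ⟨δ, ⟨hσlt, hδlt, hdig, hdigN⟩, hcong⟩
    have hδM : δ = u % p ^ (N + 1) := by
      have h2 : (s + 2 * u) % (2 * p ^ (N + 1)) = (s + 2 * δ) % (2 * p ^ (N + 1)) := by
        rw [hps] at hcong; rw [← hru]; exact hcong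
      have h3 : (2 * u) % (2 * p ^ (N + 1)) = (2 * δ) % (2 * p ^ (N + 1)) :=
        Nat.ModEq.add_left_cancel' s h2
      rw [Nat.mul_mod_mul_left, Nat.mul_mod_mul_left] at h3
      have hδmod : δ % p ^ (N + 1) = δ := Nat.mod_eq_of_lt (by omega)
      omega
    have hud : ∀ i ≤ N, digit p u i = digit p δ i := by
      intro i hi
      rw [hδM, digit_mod_pow' p u N i hi]
    constructor
    · intro i hi
      rw [hud i (le_of_lt hi)]
      exact hdig i hi
    · rw [hud N le_rfl]
      exact hdigN
  · rintro ⟨h1, h2⟩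
    refine ⟨u % p ^ (N + 1), ⟨by omega, ?_, ?_, ?_⟩, ?_⟩
    · set δ := u % p ^ (N + 1) with hδ
      have hδlt : δ < p ^ (N + 1) := Nat.mod_lt _ hMpos
      have hdN : digit p δ N = δ / p ^ N := by
        unfold digit
        exact Nat.mod_eq_of_lt (Nat.div_lt_of_lt_mul (by omega))
      have hdNu : digit p δ N = digit p u N := digit_mod_pow' p u N N le_rfl
      have hdm := Nat.div_add_mod δ (p ^ N)
      have hmod := Nat.mod_lt δ hNpos
      have key : p ^ N * (δ / p ^ N) + 2 * p ^ N ≤ p ^ N * p := by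
        calc p ^ N * (δ / p ^ N) + 2 * p ^ N = p ^ N * (δ / p ^ N + 2) := by ring
          _ ≤ p ^ N * p := Nat.mul_le_mul_left _ (by omega)
      omega
    · intro i hi
      rw [digit_mod_pow' p u N i (le_of_lt hi)]
      exact h1 i hi
    · rw [digit_mod_pow' p u N N le_rfl]
      exact h2
    · have h3 : u ≡ u % p ^ (N + 1) [MOD p ^ (N + 1)] := (Nat.mod_modEq u _).symm
      have h4 : 2 * u ≡ 2 * (u % p ^ (N + 1)) [MOD 2 * p ^ (N + 1)] :=
        Nat.ModEq.mul_left' 2 h3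
      calc r = s + 2 * u := hru
        _ ≡ s + 2 * (u % p ^ (N + 1)) [MOD 2 * p ^ (N + 1)] := Nat.ModEq.add_left s h4
        _ = p ^ N - 1 + σ + 2 * (u % p ^ (N + 1)) := by rw [hps]
end

section
/- Let p be a prime. Suppose (N, σ, δ) is an admissible triple, I is a subset of {i ∈ ℕ : σ_i ≠ 0 and i ≠ N}, and r, t are non-negative integers satisfying t + 2σ_I = (p^N - 1) + σ and r ≡ (p^N - 1) + σ + 2δ (mod 2p^{N+1}). Then r ≥ t and r ≡ t (mod 2). -/
/-!
Writing `X = (p^N - 1) + σ + 2δ`, the digit conditions of an admissible triple say that `σ + δ`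
is computed without carries and has top digit below `p - 1`, so `σ + δ < p^(N+1) - p^N`;
together with `δ < p^(N+1) - p^N` this gives `X < 2p^(N+1)`. Hence `X` is the least residue of
`r` modulo `2p^(N+1)`, so `X ≤ r` and `r ≡ X (mod 2)`, while `t = X - 2δ - 2σ_I`.
-/

theorem sum_range_pow_mul_digit_add (p a n : ℕ) :
    ∑ i ∈ Finset.range n, p ^ i * digit p a i + p ^ n * (a / p ^ n) = a := by
  induction n with
  | zero => simp
  | succ n ih =>
    have hdiv : a / p ^ n = p * (a / p ^ (n + 1)) + digit p a n := by
      rw [digit, pow_succ, ← Nat.div_div_eq_div_mul, Nat.div_add_mod]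
    conv_rhs => rw [← ih, hdiv]
    rw [Finset.sum_range_succ, pow_succ]
    ring

theorem sum_range_pow_mul_lt_pow {p n : ℕ} {d : ℕ → ℕ} (hd : ∀ i < n, d i < p) :
    ∑ i ∈ Finset.range n, p ^ i * d i < p ^ n := by
  induction n with
  | zero => simp
  | succ n ih =>
    rw [Finset.sum_range_succ, pow_succ]
    calc ∑ i ∈ Finset.range n, p ^ i * d i + p ^ n * d n
        < p ^ n + p ^ n * d n := by
          gcongr; exact ih fun i hi => hd i (by omega)
      _ = p ^ n * (d n + 1) := by ring
      _ ≤ p ^ n * p := Nat.mul_le_mul_left _ (hd n n.lt_add_one)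

theorem digit_eq_div_pow_of_lt {p a N : ℕ} (ha : a < p ^ (N + 1)) :
    digit p a N = a / p ^ N := by
  rw [digit, Nat.mod_eq_of_lt (Nat.div_lt_of_lt_mul (by rwa [← pow_succ]))]

theorem add_lt_pow_succ_sub_pow {p N a b : ℕ} (ha : a < p ^ (N + 1)) (hb : b < p ^ (N + 1))
    (hd : ∀ i < N, digit p a i + digit p b i ≤ p - 1)
    (hN : digit p a N + digit p b N < p - 1) :
    a + b < p ^ (N + 1) - p ^ N := by
  have hlow : ∑ i ∈ Finset.range N, p ^ i * (digit p a i + digit p b i) < p ^ N :=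
    sum_range_pow_mul_lt_pow fun i hi => by have := hd i hi; omega
  have hab : a + b = ∑ i ∈ Finset.range N, p ^ i * (digit p a i + digit p b i)
      + p ^ N * (digit p a N + digit p b N) := by
    conv_lhs => rw [← sum_range_pow_mul_digit_add p a N, ← sum_range_pow_mul_digit_add p b N]
    rw [digit_eq_div_pow_of_lt ha, digit_eq_div_pow_of_lt hb]
    simp only [mul_add, Finset.sum_add_distrib]
    ring
  have htop : p ^ N * (digit p a N + digit p b N + 1) ≤ p ^ N * (p - 1) :=
    Nat.mul_le_mul_left _ (by omega)
  have hsplit : p ^ (N + 1) - p ^ N = p ^ N * (p - 1) := by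
    rw [Nat.mul_sub, mul_one, pow_succ]
  rw [hsplit]
  nlinarith

theorem AdmissibleTriple.lt_two_mul_pow_succ {p N σ δ : ℕ} (ht : AdmissibleTriple p N σ δ) :
    p ^ N - 1 + σ + 2 * δ < 2 * p ^ (N + 1) := by
  obtain ⟨hσ, hδ, hd, hN⟩ := ht
  have := add_lt_pow_succ_sub_pow (by omega) (by omega) hd hN
  omega

theorem Nat.ModEq.le_of_lt {a b m : ℕ} (h : a ≡ b [MOD m]) (hb : b < m) : b ≤ a := by
  calc b = a % m := by rw [h, Nat.mod_eq_of_lt hb]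
    _ ≤ a := Nat.mod_le a m

theorem stmt_9_general (p : ℕ) (N σ δ : ℕ) (I : Finset ℕ)
    (ht : AdmissibleTriple p N σ δ)
    (r t : ℕ) (h1 : t + 2 * digitSum p σ I = p ^ N - 1 + σ)
    (h2 : r ≡ p ^ N - 1 + σ + 2 * δ [MOD 2 * p ^ (N + 1)]) :
    t ≤ r ∧ r % 2 = t % 2 := by
  have hle : p ^ N - 1 + σ + 2 * δ ≤ r := h2.le_of_lt ht.lt_two_mul_pow_succ
  have hpar : r % 2 = (p ^ N - 1 + σ + 2 * δ) % 2 := Nat.ModEq.of_mul_right _ h2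
  omega

theorem stmt_9 (p : ℕ) (hp : p.Prime) (N σ δ : ℕ) (I : Finset ℕ)
    (ht : AdmissibleTriple p N σ δ) (hI : ∀ i ∈ I, digit p σ i ≠ 0 ∧ i ≠ N)
    (r t : ℕ) (h1 : t + 2 * digitSum p σ I = p ^ N - 1 + σ)
    (h2 : r ≡ p ^ N - 1 + σ + 2 * δ [MOD 2 * p ^ (N + 1)]) :
    t ≤ r ∧ r % 2 = t % 2 :=
  stmt_9_general p N σ δ I ht r t h1 h2
end

section
/- Let p be a prime, r ≥ t non-negative integers with r - t even. Then there exists exactly one non-negative integer s with the following property: there exist an admissible triple (N, σ, δ) with s = (p^N - 1) + σ and r ≡ s + 2δ (mod 2p^{N+1}), and a subset I of {i ∈ ℕ : σ_i ≠ 0 and i ≠ N} with t + 2σ_I = s. -/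
section AuxStmt10

lemma digit_lt' {p : ℕ} (hp : 2 ≤ p) (n i : ℕ) : digit p n i < p :=
  Nat.mod_lt _ (by omega)

lemma digit_succ' (p n i : ℕ) : digit p n (i+1) = digit p (n / p) i := by
  unfold digit
  rw [Nat.div_div_eq_div_mul, ← pow_succ']

lemma digit_eq_div {p : ℕ} (hp : 2 ≤ p) {n k : ℕ} (h : n < p ^ (k+1)) :
    digit p n k = n / p ^ k := by
  apply Nat.mod_eq_of_lt
  apply Nat.div_lt_of_lt_mul
  rw [← pow_succ]
  exact h

lemma pow_le_of_digit_ne_zero {p n i : ℕ} (h : digit p n i ≠ 0) : p ^ i ≤ n := by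
  by_contra hc
  push_neg at hc
  have h0 : n / p ^ i = 0 := Nat.div_eq_of_lt hc
  simp [digit, h0] at h

lemma sum_shift (p : ℕ) (c : ℕ → ℕ) (k : ℕ) :
    ∑ i ∈ Finset.range (k+1), p ^ i * c i
      = c 0 + p * ∑ i ∈ Finset.range k, p ^ i * c (i+1) := by
  rw [Finset.sum_range_succ', Finset.mul_sum, add_comm]
  simp only [pow_zero, one_mul]
  congr 1
  exact Finset.sum_congr rfl fun i _ => by ring

lemma sum_lt {p : ℕ} (hp : 2 ≤ p) :
    ∀ (k : ℕ) (c : ℕ → ℕ), (∀ i < k, c i < p) →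
      ∑ i ∈ Finset.range k, p ^ i * c i < p ^ k := by
  intro k
  induction k with
  | zero => intro c _; simp
  | succ k ih =>
    intro c hc
    rw [Finset.sum_range_succ]
    have h1 := ih c (fun i hi => hc i (by omega))
    have h2 : p ^ k * c k ≤ p ^ k * (p - 1) :=
      mul_le_mul_right (by have := hc k (by omega); omega) _
    have h3 : p ^ k * (p - 1) + p ^ k = p ^ k * p := by
      rw [← Nat.mul_succ]; congr 1; omega
    have h4 : p ^ (k+1) = p ^ k * p := pow_succ p k
    omega

lemma sum_lt_top {p : ℕ} (hp : 2 ≤ p) (c : ℕ → ℕ) (k : ℕ)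
    (hc : ∀ i < k, c i < p) (hk : c k ≤ p - 2) :
    ∑ i ∈ Finset.range (k+1), p ^ i * c i < p ^ (k+1) - p ^ k := by
  rw [Finset.sum_range_succ]
  have h1 := sum_lt hp k c hc
  have h2 : p ^ k * c k ≤ p ^ k * (p - 2) := mul_le_mul_right hk _
  have h3 : p ^ k * (p - 2) + p ^ k + p ^ k = p ^ k * p := by
    rw [← Nat.mul_succ, ← Nat.mul_succ]; congr 1; omega
  have h4 : p ^ (k+1) = p ^ k * p := pow_succ p k
  have h5 : 0 < p ^ k := pow_pos (by omega) k
  omega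

lemma digit_sumC {p : ℕ} (hp : 2 ≤ p) :
    ∀ (k : ℕ) (c : ℕ → ℕ), (∀ i < k, c i < p) → ∀ j < k,
      digit p (∑ i ∈ Finset.range k, p ^ i * c i) j = c j := by
  intro k
  induction k with
  | zero => intro c _ j hj; omega
  | succ k ih =>
    intro c hc j hj
    rw [sum_shift]
    rcases j with _ | j
    · rw [digit_zero', Nat.add_mul_mod_self_left]
      exact Nat.mod_eq_of_lt (hc 0 (by omega))
    · rw [digit_succ']
      have hdiv : (c 0 + p * ∑ i ∈ Finset.range k, p ^ i * c (i+1)) / p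
          = ∑ i ∈ Finset.range k, p ^ i * c (i+1) := by
        rw [Nat.add_mul_div_left _ _ (by omega : 0 < p),
          Nat.div_eq_of_lt (hc 0 (by omega))]
        omega
      rw [hdiv]
      exact ih (fun i => c (i+1)) (fun i hi => hc (i+1) (by omega)) j (by omega)

lemma sum_digit_self {p : ℕ} (hp : 2 ≤ p) :
    ∀ (k n : ℕ), n < p ^ k → ∑ i ∈ Finset.range k, p ^ i * digit p n i = n := by
  intro k
  induction k with
  | zero => intro n hn; simp at hn ⊢; omega
  | succ k ih =>
    intro n hn
    rw [sum_shift]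
    have hs : ∀ x ∈ Finset.range k, p ^ x * digit p n (x+1) = p ^ x * digit p (n / p) x :=
      fun x _ => by rw [digit_succ']
    rw [Finset.sum_congr rfl hs,
      ih (n / p) (Nat.div_lt_of_lt_mul (by rw [← pow_succ']; exact hn)),
      digit_zero', Nat.mod_add_div]

lemma mod_pow_le {p : ℕ} (hp : 2 ≤ p) (m a b : ℕ) (hab : a ≤ b) :
    m % p ^ b + p ^ a ≤ m % p ^ a + p ^ b := by
  have hpa : 0 < p ^ a := pow_pos (by omega) a
  have hpb : 0 < p ^ b := pow_pos (by omega) b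
  have hpba : 0 < p ^ (b - a) := pow_pos (by omega) _
  have h1 : m % p ^ b % p ^ a = m % p ^ a := Nat.mod_mod_of_dvd _ (pow_dvd_pow p hab)
  have h2 : p ^ a * p ^ (b - a) = p ^ b := by rw [← pow_add]; congr 1; omega
  have h3 : m % p ^ b / p ^ a < p ^ (b - a) := by
    apply Nat.div_lt_of_lt_mul
    have := Nat.mod_lt m hpb
    omega
  have h4 : m % p ^ b % p ^ a + p ^ a * (m % p ^ b / p ^ a) = m % p ^ b :=
    Nat.mod_add_div _ _
  have h5 : p ^ a * (m % p ^ b / p ^ a) ≤ p ^ a * (p ^ (b - a) - 1) :=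
    mul_le_mul_right (by omega) _
  have h6 : p ^ a * (p ^ (b - a) - 1) + p ^ a = p ^ a * p ^ (b - a) := by
    rw [← Nat.mul_succ]; congr 1; omega
  omega

end AuxStmt10

theorem stmt_10 (p : ℕ) (hp : p.Prime) (r t : ℕ) (hrt : t ≤ r) (hev : Even (r - t)) :
    ∃! s : ℕ, ∃ N σ δ : ℕ, AdmissibleTriple p N σ δ ∧ s = p ^ N - 1 + σ ∧
      r ≡ s + 2 * δ [MOD 2 * p ^ (N + 1)] ∧
      ∃ I : Finset ℕ, (∀ i ∈ I, digit p σ i ≠ 0 ∧ i ≠ N) ∧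
        t + 2 * digitSum p σ I = s := by
  have hp2 : 2 ≤ p := hp.two_le
  obtain ⟨m, hm⟩ : ∃ m, r = t + 2 * m := ⟨(r - t)/2, by obtain ⟨k, hk⟩ := hev; omega⟩
  clear hev hrt
  have hpowpos : ∀ k : ℕ, 0 < p ^ k := fun k => pow_pos (by omega) k
  have hex : ∃ N : ℕ, t + m % p ^ (N+1) + 1 < p ^ (N+1) := by
    refine ⟨t + m + 1, ?_⟩
    have h1 : m % p ^ (t + m + 1 + 1) ≤ m := Nat.mod_le _ _
    have h2 : t + m + 1 + 1 < p ^ (t + m + 1 + 1) := Nat.lt_pow_self (by omega)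
    omega
  obtain ⟨N, hPN, hNmin⟩ : ∃ N, (t + m % p ^ (N+1) + 1 < p ^ (N+1)) ∧
      ∀ M, M < N → ¬ (t + m % p ^ (M+1) + 1 < p ^ (M+1)) :=
    ⟨Nat.find hex, Nat.find_spec hex, fun M hM => Nat.find_min hex hM⟩
  have hLN : p ^ N ≤ t + m % p ^ N + 1 := by
    rcases Nat.eq_zero_or_pos N with h0 | h0
    · rw [h0]; simp
    · have hmin := hNmin (N-1) (by omega)
      push_neg at hmin
      have hh : N - 1 + 1 = N := by omega
      rwa [hh] at hmin
  obtain ⟨u, hudef⟩ : ∃ u, u = m % p ^ (N+1) := ⟨_, rfl⟩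
  have hup : u < p ^ (N+1) := by rw [hudef]; exact Nat.mod_lt _ (hpowpos _)
  have hps : p ^ (N+1) = p ^ N * p := pow_succ p N
  have hmodN : u % p ^ N = m % p ^ N := by
    rw [hudef]; exact Nat.mod_mod_of_dvd m (pow_dvd_pow p (by omega))
  have hfl : p ^ N ≤ t + u + 1 := by
    have := Nat.mod_le u (p ^ N)
    omega
  obtain ⟨v, hvdef⟩ : ∃ v, v = t + u + 1 - p ^ N := ⟨_, rfl⟩
  have hv : t + u + 1 = p ^ N + v := by omega
  have hvp : v < p ^ (N+1) := by have := hpowpos N; omega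
  have hvN : digit p v N = v / p ^ N := digit_eq_div hp2 hvp
  have huN : digit p u N = u / p ^ N := digit_eq_div hp2 hup
  have hmul1 : p ^ N * (p - 1) + p ^ N = p ^ N * p := by
    rw [← Nat.mul_succ]; congr 1; omega
  have hvNle : digit p v N ≤ p - 2 := by
    rw [hvN]
    have h1 : v < p ^ N * (p - 1) := by omega
    have h2 : v / p ^ N < p - 1 := Nat.div_lt_of_lt_mul h1
    omega
  have huvN : digit p u N ≤ digit p v N := by
    rw [huN, hvN]
    have h1 : u % p ^ N + p ^ N * (u / p ^ N) = u := Nat.mod_add_div u (p ^ N)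
    have h2 : u / p ^ N * p ^ N ≤ v := by rw [mul_comm]; omega
    exact (Nat.le_div_iff_mul_le (hpowpos N)).mpr h2
  have hUlt : ∀ i, digit p u i < p := digit_lt' hp2 u
  have hVlt : ∀ i, digit p v i < p := digit_lt' hp2 v
  obtain ⟨A, hAdef⟩ : ∃ A, A = ∑ i ∈ Finset.range (N+1),
      p ^ i * (digit p u i - digit p v i) := ⟨_, rfl⟩
  obtain ⟨B, hBdef⟩ : ∃ B, B = ∑ i ∈ Finset.range (N+1),
      p ^ i * (digit p v i - digit p u i) := ⟨_, rfl⟩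
  obtain ⟨σ, hσdef⟩ : ∃ σ, σ = ∑ i ∈ Finset.range (N+1),
      p ^ i * ((digit p u i - digit p v i) + (digit p v i - digit p u i)) := ⟨_, rfl⟩
  obtain ⟨δ, hδdef⟩ : ∃ δ, δ = ∑ i ∈ Finset.range (N+1),
      p ^ i * min (digit p u i) (digit p v i) := ⟨_, rfl⟩
  have hσd : ∀ j < N + 1, digit p σ j
      = (digit p u j - digit p v j) + (digit p v j - digit p u j) := by
    intro j hj
    rw [hσdef]
    exact digit_sumC hp2 (N+1) _ (fun i _ => by have := hUlt i; have := hVlt i; omega) j hj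
  have hδd : ∀ j < N + 1, digit p δ j = min (digit p u j) (digit p v j) := by
    intro j hj
    rw [hδdef]
    exact digit_sumC hp2 (N+1) _
      (fun i _ => lt_of_le_of_lt (min_le_left _ _) (hUlt i)) j hj
  have hσlt : σ < p ^ (N+1) - p ^ N := by
    rw [hσdef]
    exact sum_lt_top hp2 _ N (fun i _ => by have := hUlt i; have := hVlt i; omega)
      (by omega)
  have hδlt : δ < p ^ (N+1) - p ^ N := by
    rw [hδdef]
    exact sum_lt_top hp2 _ N
      (fun i _ => lt_of_le_of_lt (min_le_left _ _) (hUlt i))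
      (by have := min_le_right (digit p u N) (digit p v N); omega)
  have hurep : ∑ i ∈ Finset.range (N+1), p ^ i * digit p u i = u :=
    sum_digit_self hp2 _ _ hup
  have hvrep : ∑ i ∈ Finset.range (N+1), p ^ i * digit p v i = v :=
    sum_digit_self hp2 _ _ hvp
  have hAδu : A + δ = u := by
    conv_rhs => rw [← hurep]
    rw [hAdef, hδdef, ← Finset.sum_add_distrib]
    refine Finset.sum_congr rfl fun i _ => ?_
    rw [← Nat.mul_add]
    congr 1
    omega
  have hBδv : B + δ = v := by
    conv_rhs => rw [← hvrep]
    rw [hBdef, hδdef, ← Finset.sum_add_distrib]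
    refine Finset.sum_congr rfl fun i _ => ?_
    rw [← Nat.mul_add]
    congr 1
    omega
  have hABσ : A + B = σ := by
    rw [hAdef, hBdef, hσdef, ← Finset.sum_add_distrib]
    exact Finset.sum_congr rfl fun i _ => by rw [← Nat.mul_add]
  refine ⟨t + 2 * A, ⟨N, σ, δ, ⟨hσlt, hδlt, ?_, ?_⟩, ?_, ?_,
    ⟨(Finset.range (N+1)).filter (fun i => digit p v i < digit p u i), ?_, ?_⟩⟩, ?_⟩
  · -- digit condition below N
    intro i hi
    rw [hσd i (by omega), hδd i (by omega)]
    have := hUlt i; have := hVlt i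
    omega
  · -- digit condition at N
    rw [hσd N (by omega), hδd N (by omega)]
    omega
  · -- s = p^N - 1 + σ
    have := hpowpos N
    omega
  · -- the congruence
    have hmu : 2 * m ≡ 2 * u [MOD 2 * p ^ (N+1)] := by
      rw [hudef]
      exact Nat.ModEq.mul_left' 2 ((Nat.mod_modEq m (p ^ (N+1))).symm)
    have h5 : t + 2 * A + 2 * δ = t + 2 * u := by omega
    rw [hm, h5]
    exact hmu.add_left t
  · -- the set I is OK
    intro i hi
    simp only [Finset.mem_filter, Finset.mem_range] at hi
    constructor
    · rw [hσd i hi.1]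
      omega
    · rintro rfl
      omega
  · -- t + 2 * digitSum = s
    have h6 : digitSum p σ ((Finset.range (N+1)).filter
        (fun i => digit p v i < digit p u i)) = A := by
      unfold digitSum
      have hstep : ∀ i ∈ (Finset.range (N+1)).filter
          (fun i => digit p v i < digit p u i),
          p ^ i * digit p σ i = p ^ i * (digit p u i - digit p v i) := by
        intro i hi
        simp only [Finset.mem_filter, Finset.mem_range] at hi
        rw [hσd i hi.1]
        congr 1
        omega
      rw [Finset.sum_congr rfl hstep, hAdef]
      refine Finset.sum_subset (Finset.filter_subset _ _) ?_
      intro x hx hxn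
      have hle : ¬ digit p v x < digit p u x := fun hlt =>
        hxn (Finset.mem_filter.mpr ⟨hx, hlt⟩)
      have h0 : digit p u x - digit p v x = 0 := by omega
      rw [h0, Nat.mul_zero]
    rw [h6]
  · -- uniqueness
    rintro s' ⟨N', σ', δ', ⟨hσ'lt, hδ'lt, hdig', htop'⟩, hs', hmod', I', hI', ht'⟩
    have hps' : p ^ (N'+1) = p ^ N' * p := pow_succ p N'
    have hσ'p : σ' < p ^ (N'+1) := by have := hpowpos N'; omega
    have hδ'p : δ' < p ^ (N'+1) := by have := hpowpos N'; omega
    have hI'sub : I' ⊆ Finset.range N' := by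
      intro i hi
      obtain ⟨h1, h2⟩ := hI' i hi
      have h3 : p ^ i ≤ σ' := pow_le_of_digit_ne_zero h1
      have h5 : i < N' + 1 := by
        by_contra hc
        push_neg at hc
        have := Nat.pow_le_pow_right (show 1 ≤ p by omega) hc
        omega
      exact Finset.mem_range.mpr (by omega)
    obtain ⟨c, hcdef⟩ : ∃ c : ℕ → ℕ,
        c = fun i => if i ∈ I' then digit p σ' i else 0 := ⟨_, rfl⟩
    have hclt : ∀ i, c i < p := by
      intro i
      simp only [hcdef]
      split
      · exact digit_lt' hp2 _ _
      · omega
    have hcle : ∀ i, c i ≤ digit p σ' i := by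
      intro i
      simp only [hcdef]
      split
      · exact le_refl _
      · exact Nat.zero_le _
    have hcN' : ∀ i, N' ≤ i → c i = 0 := by
      intro i h
      have hnm : i ∉ I' := fun hmem => by
        have := Finset.mem_range.mp (hI'sub hmem); omega
      simp only [hcdef, if_neg hnm]
    have hA' : ∑ i ∈ Finset.range (N'+1), p ^ i * c i = digitSum p σ' I' := by
      unfold digitSum
      have h1 : ∀ i ∈ Finset.range (N'+1), p ^ i * c i
          = if i ∈ I' then p ^ i * digit p σ' i else 0 := by
        intro i _
        simp only [hcdef]
        split <;> simp
      rw [Finset.sum_congr rfl h1, Finset.sum_ite_mem,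
        Finset.inter_eq_right.mpr (hI'sub.trans (Finset.range_subset_range.mpr (by omega)))]
    obtain ⟨u', hu'def⟩ : ∃ u', u' = digitSum p σ' I' + δ' := ⟨_, rfl⟩
    have hδ'rep : ∑ i ∈ Finset.range (N'+1), p ^ i * digit p δ' i = δ' :=
      sum_digit_self hp2 _ _ hδ'p
    have hu'coef : ∀ i < N' + 1, c i + digit p δ' i < p := by
      intro i hi
      rcases Nat.lt_or_ge i N' with h | h
      · have := hdig' i h; have := hcle i; omega
      · have h0 : c i = 0 := hcN' i h
        have := digit_lt' hp2 δ' i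
        omega
    have hu'rep : u' = ∑ i ∈ Finset.range (N'+1), p ^ i * (c i + digit p δ' i) := by
      rw [hu'def, ← hA']
      conv_lhs => rw [← hδ'rep]
      rw [← Finset.sum_add_distrib]
      exact Finset.sum_congr rfl fun i _ => (Nat.mul_add _ _ _).symm
    have hu'dig : ∀ j < N'+1, digit p u' j = c j + digit p δ' j := by
      intro j hj
      rw [hu'rep]
      exact digit_sumC hp2 _ _ hu'coef j hj
    have hu'lt : u' < p ^ (N'+1) := by
      rw [hu'rep]
      exact sum_lt hp2 _ _ hu'coef
    have hmeq : m % p ^ (N'+1) = u' % p ^ (N'+1) := by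
      have h1 : t + 2 * m ≡ s' + 2 * δ' [MOD 2 * p ^ (N'+1)] := by
        rw [← hm]; exact hmod'
      have heq : s' + 2 * δ' = t + 2 * u' := by omega
      rw [heq] at h1
      have h3 : 2 * m ≡ 2 * u' [MOD 2 * p ^ (N'+1)] := Nat.ModEq.add_left_cancel' t h1
      have h4 := h3
      unfold Nat.ModEq at h4
      rw [Nat.mul_mod_mul_left, Nat.mul_mod_mul_left] at h4
      omega
    have hu'm : u' = m % p ^ (N'+1) := by
      have := Nat.mod_eq_of_lt hu'lt
      omega
    obtain ⟨w, hwdef⟩ : ∃ w, w = ∑ i ∈ Finset.range (N'+1),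
        p ^ i * (digit p σ' i - c i) := ⟨_, rfl⟩
    obtain ⟨v', hv'def⟩ : ∃ v', v' = w + δ' := ⟨_, rfl⟩
    have hσ'rep : ∑ i ∈ Finset.range (N'+1), p ^ i * digit p σ' i = σ' :=
      sum_digit_self hp2 _ _ hσ'p
    have hv'coef : ∀ i < N'+1, (digit p σ' i - c i) + digit p δ' i < p := by
      intro i hi
      rcases Nat.lt_or_ge i N' with h | h
      · have := hdig' i h; omega
      · have h0 : i = N' := by omega
        subst h0
        omega
    have hv'rep : v' = ∑ i ∈ Finset.range (N'+1),
        p ^ i * ((digit p σ' i - c i) + digit p δ' i) := by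
      rw [hv'def, hwdef]
      conv_lhs => rw [← hδ'rep]
      rw [← Finset.sum_add_distrib]
      exact Finset.sum_congr rfl fun i _ => (Nat.mul_add _ _ _).symm
    have hv'dig : ∀ j < N'+1, digit p v' j = (digit p σ' j - c j) + digit p δ' j := by
      intro j hj
      rw [hv'rep]
      exact digit_sumC hp2 _ _ hv'coef j hj
    have hv'lt : v' < p ^ (N'+1) - p ^ N' := by
      rw [hv'rep]
      refine sum_lt_top hp2 _ N' (fun i hi => hv'coef i (by omega)) ?_
      have := hcN' N' le_rfl
      omega
    have hab : (∑ i ∈ Finset.range (N'+1), p ^ i * c i) + w = σ' := by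
      conv_rhs => rw [← hσ'rep]
      rw [hwdef, ← Finset.sum_add_distrib]
      refine Finset.sum_congr rfl fun i _ => ?_
      rw [← Nat.mul_add]
      congr 1
      have := hcle i
      omega
    have hkey : t + u' + 1 = p ^ N' + v' := by
      have h0 := hpowpos N'
      omega
    have hPN' : t + m % p ^ (N'+1) + 1 < p ^ (N'+1) := by
      rw [← hu'm]
      have h0 := hpowpos N'
      have h1 : p ^ N' ≤ p ^ (N'+1) := Nat.pow_le_pow_right (by omega) (by omega)
      omega
    have hLN' : p ^ N' ≤ t + m % p ^ N' + 1 := by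
      have hmm : m % p ^ N' = u' % p ^ N' := by
        have h1 : m % p ^ (N'+1) % p ^ N' = m % p ^ N' :=
          Nat.mod_mod_of_dvd m (pow_dvd_pow p (by omega))
        rw [← h1, ← hu'm]
      have hv'p2 : v' < p ^ (N'+1) := by have := hpowpos N'; omega
      have hdu : digit p u' N' = u' / p ^ N' := digit_eq_div hp2 hu'lt
      have hdv : digit p v' N' = v' / p ^ N' := digit_eq_div hp2 hv'p2
      have h5 : u' % p ^ N' + p ^ N' * (u' / p ^ N') = u' := Nat.mod_add_div u' _
      have h6 : p ^ N' * (v' / p ^ N') ≤ v' := by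
        rw [mul_comm]
        exact Nat.div_mul_le_self v' (p ^ N')
      have h7 : p ^ N' * (u' / p ^ N') ≤ p ^ N' * (v' / p ^ N') := by
        apply mul_le_mul_right
        rw [← hdu, ← hdv, hu'dig N' (by omega), hv'dig N' (by omega)]
        have := hcN' N' le_rfl
        omega
      omega
    have hge : N ≤ N' := by
      by_contra hc
      push_neg at hc
      exact hNmin N' hc hPN'
    have hNN' : N' = N := by
      rcases Nat.eq_or_lt_of_le hge with h | h
      · omega
      · exfalso
        have hgap := mod_pow_le hp2 m (N+1) N' h
        omega
    rw [hNN'] at hu'dig hv'dig hu'm hkey hA'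
    have huu : u' = u := by rw [hu'm, hudef]
    have hvv : v' = v := by omega
    have hcA : ∀ i ∈ Finset.range (N+1),
        p ^ i * c i = p ^ i * (digit p u i - digit p v i) := by
      intro i hi
      have hi' := Finset.mem_range.mp hi
      have hdu := hu'dig i hi'
      have hdv := hv'dig i hi'
      rw [huu] at hdu
      rw [hvv] at hdv
      congr 1
      by_cases hmem : i ∈ I'
      · have h1 : c i = digit p σ' i := by simp only [hcdef, if_pos hmem]
        have h2 := (hI' i hmem).1
        omega
      · have h1 : c i = 0 := by simp only [hcdef, if_neg hmem]
        omega
    have hsum : ∑ i ∈ Finset.range (N+1), p ^ i * c i = A := by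
      rw [hAdef]
      exact Finset.sum_congr rfl hcA
    omega
end
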